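/- For every even integer d ≥ 2, the following binomial-coefficient inequality holds: C(d, d/2) ≥ 2^{d/16} · Σ_{i=0}^{⌊d/32⌋} C(d/2, i)², where C(n,k) denotes the binomial coefficient. -/

import Mathlib

/-!
With `d = 2n`, Vandermonde gives `C(2n, n) = ∑ᵢ C(n, i)² ≥ C(n, J)²` for `J = ⌊n/3⌋`. Below `n/3`
the ratio `C(n, k+1) / C(n, k) = (n - k) / (k + 1)` is at least `2`, so `C(n, J) ≥ 2^(J - m) C(n, m)`
for `m = ⌊n/16⌋`, and in particular `C(n, i) ≤ C(n, m)` for `i ≤ m`. The sum of the first `m + 1`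
squares is therefore at most `2^m C(n, m)² ≤ 2^(m - 2(J - m)) C(n, J)²`, and `2(J - m) - m` is at
least `⌊n/8⌋ + 1 ≥ d/16` once `n ≥ 3`; the cases `n ≤ 2` are checked directly.
-/

open Finset

theorem Nat.two_mul_choose_le_choose_succ {n k : ℕ} (h : 3 * k + 2 ≤ n) :
    2 * n.choose k ≤ n.choose (k + 1) := by
  refine Nat.le_of_mul_le_mul_right ?_ k.succ_pos
  rw [Nat.choose_succ_right_eq, mul_comm 2, mul_assoc]
  exact Nat.mul_le_mul_left _ (by omega)

theorem Nat.choose_mul_two_pow_sub_le {n i j : ℕ} (hij : i ≤ j) (hj : 3 * j ≤ n) :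
    n.choose i * 2 ^ (j - i) ≤ n.choose j := by
  induction j, hij using Nat.le_induction with
  | base => simp
  | succ k hik ih =>
    calc n.choose i * 2 ^ (k + 1 - i) = 2 * (n.choose i * 2 ^ (k - i)) := by
          rw [Nat.sub_add_comm hik, pow_succ]; ring
      _ ≤ 2 * n.choose k := Nat.mul_le_mul_left 2 (ih (by omega))
      _ ≤ n.choose (k + 1) := Nat.two_mul_choose_le_choose_succ (by omega)

theorem Nat.choose_sq_le_choose_two_mul {n k : ℕ} (hk : k ≤ n) :
    n.choose k ^ 2 ≤ (2 * n).choose n := by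
  rw [← Nat.sum_range_choose_sq]
  exact single_le_sum (f := fun i => n.choose i ^ 2) (fun _ _ => Nat.zero_le _)
    (mem_range_succ_iff.mpr hk)

theorem Nat.two_pow_mul_sum_choose_sq_le {n : ℕ} (hn : 0 < n) :
    2 ^ (n / 8 + 1) * ∑ i ∈ range (n / 16 + 1), n.choose i ^ 2 ≤ (2 * n).choose n := by
  obtain hn2 | hn3 : n ≤ 2 ∨ 3 ≤ n := by omega
  · interval_cases n <;> decide
  set m := n / 16
  set J := n / 3
  have hsum : ∑ i ∈ range (m + 1), n.choose i ^ 2 ≤ (m + 1) * n.choose m ^ 2 := by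
    calc ∑ i ∈ range (m + 1), n.choose i ^ 2 ≤ ∑ _i ∈ range (m + 1), n.choose m ^ 2 := by
          refine sum_le_sum fun i hi => Nat.pow_le_pow_left ?_ 2
          have him : i ≤ m := mem_range_succ_iff.mp hi
          exact (Nat.le_mul_of_pos_right _ (by positivity)).trans
            (Nat.choose_mul_two_pow_sub_le him (by omega))
      _ = (m + 1) * n.choose m ^ 2 := by simp
  have hdbl : n.choose m * 2 ^ (J - m) ≤ n.choose J :=
    Nat.choose_mul_two_pow_sub_le (by omega) (by omega)
  calc 2 ^ (n / 8 + 1) * ∑ i ∈ range (m + 1), n.choose i ^ 2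
      ≤ 2 ^ (n / 8 + 1) * (2 ^ m * n.choose m ^ 2) := by
        grw [hsum, show m + 1 ≤ 2 ^ m from m.lt_two_pow_self]
    _ ≤ 2 ^ (2 * (J - m)) * n.choose m ^ 2 := by
        rw [← mul_assoc, ← pow_add]
        gcongr
        · norm_num
        · omega
    _ = (n.choose m * 2 ^ (J - m)) ^ 2 := by ring
    _ ≤ n.choose J ^ 2 := by gcongr
    _ ≤ (2 * n).choose n := Nat.choose_sq_le_choose_two_mul (by omega)

theorem Real.rpow_natCast_div_le_pow_div_add_one {x : ℝ} (hx : 1 ≤ x) (d k : ℕ) :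
    x ^ ((d : ℝ) / k) ≤ x ^ (d / k + 1) := by
  rw [← Real.rpow_natCast]
  refine Real.rpow_le_rpow_of_exponent_le hx ?_
  rw [← Nat.floor_div_eq_div (K := ℝ)]
  push_cast
  exact (Nat.lt_floor_add_one _).le

theorem stmt_2 (d : ℕ) (hd : 2 ≤ d) (hde : Even d) :
    (2 : ℝ) ^ ((d : ℝ) / 16) *
        (∑ i ∈ Finset.range (d / 32 + 1), ((d / 2).choose i : ℝ) ^ 2)
      ≤ (d.choose (d / 2) : ℝ) := by
  obtain ⟨n, rfl⟩ := hde
  have key := Nat.two_pow_mul_sum_choose_sq_le (n := n) (by omega)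
  rw [show (n + n) / 2 = n by omega, show (n + n) / 32 = n / 16 by omega, ← two_mul]
  calc (2 : ℝ) ^ ((2 * n : ℕ) / 16 : ℝ) * ∑ i ∈ range (n / 16 + 1), (n.choose i : ℝ) ^ 2
      ≤ 2 ^ (2 * n / 16 + 1) * ∑ i ∈ range (n / 16 + 1), (n.choose i : ℝ) ^ 2 := by
        gcongr
        exact_mod_cast Real.rpow_natCast_div_le_pow_div_add_one one_le_two (2 * n) 16
    _ ≤ ((2 * n).choose n : ℝ) := by
        rw [show 2 * n / 16 = n / 8 by omega]
        exact_mod_cast key
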